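/- arXiv:2509.20887 — 2 statements merged into one kernel-verified Lean document; each statement's English description precedes it below -/
import Mathlib

section
/- Let R be a Noetherian integrally closed domain with fraction field K. Then R equals the intersection, inside K, of the localizations R_𝔭 over all height-one prime ideals 𝔭 of R. -/
/-- A height-one prime ideal of a domain: a nonzero prime ideal all of whose
proper prime subideals are zero. -/
def Ideal.IsHeightOne {R : Type*} [CommRing R] (p : Ideal R) : Prop :=
  p ≠ ⊥ ∧ ∀ q : Ideal R, q.IsPrime → q < p → q = ⊥

/-- A Noetherian integrally closed domain `R` is the intersection, inside its fraction
field `K`, of its localizations at height-one primes: an element `x ∈ K` lies in `R_𝔭`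
(i.e. can be written with denominator outside `𝔭`) for all height-one primes `𝔭`
if and only if it lies in (the image of) `R`. -/
theorem normal_domain_eq_inter_height_one_localizations
    {R K : Type*} [CommRing R] [IsDomain R] [IsNoetherianRing R] [IsIntegrallyClosed R]
    [Field K] [Algebra R K] [IsFractionRing R K] (x : K) :
    (∀ (p : Ideal R) (hp : p.IsPrime), p.IsHeightOne →
      ∃ (a b : R), b ∈ p.primeCompl ∧ x * algebraMap R K b = algebraMap R K a) ↔
    ∃ a : R, algebraMap R K a = x := by
  constructor
  · intro h
    by_contra hx
    push_neg at hx
    obtain ⟨⟨a, b⟩, hab⟩ := IsLocalization.surj (nonZeroDivisors R) x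
    simp only at hab
    set β := algebraMap R K with hβ
    have hβinj : Function.Injective β := IsFractionRing.injective R K
    have hb0 : (b : R) ≠ 0 := nonZeroDivisors.ne_zero b.2
    have hβb0 : β (b : R) ≠ 0 := fun h0 => hb0 (hβinj (by simpa using h0))
    -- `a ∉ (b)` since `x ∉ R`
    have ha : a ∉ Ideal.span {(b : R)} := by
      intro hmem
      obtain ⟨s, hs⟩ := Ideal.mem_span_singleton'.mp hmem
      refine hx s ?_
      have : β s * β (b : R) = x * β (b : R) := by
        rw [hab, ← map_mul, hs]
      exact mul_right_cancel₀ hβb0 this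
    -- the family of colon ideals
    set F : Set (Ideal R) :=
      { J | ∃ c, c ∉ Ideal.span {(b : R)} ∧
          J = (Ideal.span {(b : R)}).colon (Ideal.span {c}) ∧
          (Ideal.span {(b : R)}).colon (Ideal.span {a}) ≤ J } with hF
    have hFne : F.Nonempty := ⟨_, a, ha, rfl, le_rfl⟩
    obtain ⟨p, hpF, hmax⟩ :=
      (set_has_maximal_iff_noetherian.mpr (isNoetherianRing_iff.mp inferInstance)) F hFne
    obtain ⟨c, hc, hpc, hIp⟩ := hpF
    -- membership in `p`
    have hpmem : ∀ t, t ∈ p ↔ ∃ s, s * (b : R) = t * c := by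
      intro t
      rw [hpc, Ideal.mem_colon_span_singleton, Ideal.mem_span_singleton']
    have hp1 : (1 : R) ∉ p := by
      intro h1
      obtain ⟨s, hs⟩ := (hpmem 1).mp h1
      exact hc (Ideal.mem_span_singleton'.mpr ⟨s, by linear_combination hs⟩)
    -- `p` is prime
    have hprime : Ideal.IsPrime p := by
      constructor
      · intro htop
        exact hp1 (htop ▸ Submodule.mem_top)
      · intro u v huv
        by_contra hcon
        push_neg at hcon
        obtain ⟨hu, hv⟩ := hcon
        set J' : Ideal R := (Ideal.span {(b : R)}).colon (Ideal.span {c * u}) with hJ'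
        have hcu : c * u ∉ Ideal.span {(b : R)} := by
          intro hmem
          obtain ⟨s, hs⟩ := Ideal.mem_span_singleton'.mp hmem
          exact hu ((hpmem u).mpr ⟨s, by linear_combination hs⟩)
        have hle : p ≤ J' := by
          intro t ht
          obtain ⟨s, hs⟩ := (hpmem t).mp ht
          rw [hJ', Ideal.mem_colon_span_singleton]
          exact Ideal.mem_span_singleton'.mpr ⟨s * u, by linear_combination u * hs⟩
        have hJ'F : J' ∈ F := ⟨c * u, hcu, rfl, hIp.trans hle⟩
        have hpJ : p = J' := by
          by_contra hne
          exact hmax J' hJ'F (lt_of_le_of_ne hle hne)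
        apply hv
        obtain ⟨s, hs⟩ := (hpmem (u * v)).mp huv
        have hvJ : v ∈ J' := by
          rw [hJ', Ideal.mem_colon_span_singleton]
          exact Ideal.mem_span_singleton'.mpr ⟨s, by linear_combination hs⟩
        rw [hpJ]
        exact hvJ
    have hbp : (b : R) ∈ p := (hpmem _).mpr ⟨c, mul_comm c b⟩
    -- case split
    by_cases hcase : ∀ t ∈ p, ∀ s, s * (b : R) = t * c → s ∈ p
    · -- `y = c/b` is integral over `R`, hence in `R`, contradicting `c ∉ (b)`
      set y : K := β c / β (b : R) with hy
      have hyb : y * β (b : R) = β c := div_mul_cancel₀ _ hβb0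
      set N : Submodule R K := Submodule.map (Algebra.linearMap R K) p with hN
      have hNfg : N.FG := (IsNoetherian.noetherian p).map _
      have hN0 : N ≠ ⊥ := by
        intro h0
        have : β (b : R) ∈ N := ⟨b, hbp, rfl⟩
        rw [h0] at this
        exact hβb0 (by simpa using this)
      have hstab : ∀ n ∈ N, y • n ∈ N := by
        rintro n ⟨t, ht, rfl⟩
        obtain ⟨s, hs⟩ := (hpmem t).mp ht
        refine ⟨s, hcase t ht s hs, ?_⟩
        show β s = y • β t
        have : β s * β (b : R) = (y * β t) * β (b : R) := by
          rw [mul_right_comm, hyb, ← map_mul, ← map_mul, hs, mul_comm t c]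
        have := mul_right_cancel₀ hβb0 this
        rw [smul_eq_mul, ← this]
      have hyint : IsIntegral R y := isIntegral_of_smul_mem_submodule N hN0 hNfg y hstab
      obtain ⟨r, hr⟩ := IsIntegrallyClosed.isIntegral_iff.mp hyint
      apply hc
      refine Ideal.mem_span_singleton'.mpr ⟨r, hβinj ?_⟩
      rw [map_mul, hr]
      exact hyb
    · push_neg at hcase
      obtain ⟨t₀, ht₀, s₀, hs₀, hs₀p⟩ := hcase
      -- global key identity
      have key : ∀ t ∈ p, ∃ s, s₀ * t = s * t₀ := by
        intro t ht
        obtain ⟨s, hs⟩ := (hpmem t).mp ht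
        refine ⟨s, mul_right_cancel₀ hb0 ?_⟩
        linear_combination t * hs₀ - t₀ * hs
      -- `p` has height one
      have hH1 : Ideal.IsHeightOne p := by
        refine ⟨?_, ?_⟩
        · intro h0
          rw [h0] at hbp
          exact hb0 (by simpa using hbp)
        · intro q hq hqp
          obtain ⟨t₁, ht₁p, ht₁q⟩ := SetLike.exists_of_lt hqp
          have ht₀q : t₀ ∉ q := by
            intro h0
            obtain ⟨s₁, hkey⟩ := key t₁ ht₁p
            have hmem : s₀ * t₁ ∈ q := hkey ▸ q.mul_mem_left s₁ h0
            rcases hq.mem_or_mem hmem with h' | h'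
            · exact hs₀p (hqp.le h')
            · exact ht₁q h'
          have hs₀q : s₀ ∉ q := fun h0 => hs₀p (hqp.le h0)
          have ind : ∀ n : ℕ, ∀ t ∈ q, ∃ s ∈ q, s₀ ^ n * t = s * t₀ ^ n := by
            intro n
            induction n with
            | zero => exact fun t ht => ⟨t, ht, by ring⟩
            | succ n ih =>
              intro t ht
              obtain ⟨s, hseq⟩ := key t (hqp.le ht)
              have hsq : s ∈ q := by
                have hmem : s * t₀ ∈ q := hseq ▸ q.mul_mem_left s₀ ht
                rcases hq.mem_or_mem hmem with h' | h'
                · exact h'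
                · exact absurd h' ht₀q
              obtain ⟨s', hs'q, hs'⟩ := ih s hsq
              refine ⟨s', hs'q, ?_⟩
              calc s₀ ^ (n + 1) * t = s₀ ^ n * (s₀ * t) := by ring
                _ = s₀ ^ n * (s * t₀) := by rw [hseq]
                _ = (s₀ ^ n * s) * t₀ := by ring
                _ = (s' * t₀ ^ n) * t₀ := by rw [hs']
                _ = s' * t₀ ^ (n + 1) := by ring
          -- pass to the localization at `p` and use Krull intersection
          rw [eq_bot_iff]
          intro t ht
          set A := Localization.AtPrime p
          haveI : IsNoetherianRing A :=
            IsLocalization.isNoetherianRing (Ideal.primeCompl p) A inferInstance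
          set φ := algebraMap R A with hφ
          have hφinj : Function.Injective φ :=
            IsLocalization.injective A (Ideal.primeCompl_le_nonZeroDivisors p)
          have ht₀unit : ¬ IsUnit (φ t₀) := by
            intro hunit
            exact ((IsLocalization.AtPrime.isUnit_to_map_iff A p t₀).mp hunit) ht₀
          have hbot : (⨅ n : ℕ, (Ideal.span {φ t₀}) ^ n) = ⊥ :=
            Ideal.iInf_pow_eq_bot_of_isDomain (I := Ideal.span {φ t₀})
              (fun htop => ht₀unit (Ideal.span_singleton_eq_top.mp htop))
          have hmem : φ t ∈ ⨅ n : ℕ, (Ideal.span {φ t₀}) ^ n := by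
            rw [Ideal.mem_iInf]
            intro n
            obtain ⟨s, _, hsn⟩ := ind n t ht
            have hu : IsUnit (φ (s₀ ^ n)) := by
              rw [map_pow]
              exact ((IsLocalization.AtPrime.isUnit_to_map_iff A p s₀).mpr hs₀p).pow n
            rw [Ideal.span_singleton_pow, Ideal.mem_span_singleton']
            refine ⟨↑hu.unit⁻¹ * φ s, ?_⟩
            have h1 : φ (s₀ ^ n) * φ t = φ s * (φ t₀) ^ n := by
              rw [← map_pow, ← map_mul, ← map_mul, hsn]
            calc (↑hu.unit⁻¹ * φ s) * (φ t₀) ^ n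
                = ↑hu.unit⁻¹ * (φ s * (φ t₀) ^ n) := by ring
              _ = ↑hu.unit⁻¹ * (φ (s₀ ^ n) * φ t) := by rw [h1]
              _ = (↑hu.unit⁻¹ * φ (s₀ ^ n)) * φ t := by ring
              _ = φ t := by rw [IsUnit.val_inv_mul, one_mul]
          rw [hbot] at hmem
          have : φ t = 0 := by simpa using hmem
          have : t = 0 := hφinj (by simpa using this)
          simpa using this
      -- apply the hypothesis at `p`
      obtain ⟨a', b', hb', hxb'⟩ := h p hprime hH1
      apply hb'
      apply hIp
      rw [Ideal.mem_colon_span_singleton]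
      refine Ideal.mem_span_singleton'.mpr ⟨a', ?_⟩
      apply hβinj
      have h1 : β a' * β (b : R) = β a * β b' := by
        rw [← hxb', mul_right_comm, hab]
      rw [map_mul, map_mul]
      linear_combination h1
  · rintro ⟨a, rfl⟩ p hp _
    exact ⟨a, 1, (Ideal.ne_top_iff_one p).mp hp.ne_top, by simp⟩
end

section
/- Let R be a commutative ring, and let s₁, s₂, s₃, s₄ be a basis of R⁴ equipped with a bilinear form ⟨·,·⟩ such that the 4×4 Gram matrix (⟨s_i, s_j⟩) has unit determinant and ⟨s_i, s_j⟩ = 0 for all i, j ∈ {1,2}. Then the determinant of the 2×2 matrix with entries ⟨s₁,s₃⟩, ⟨s₂,s₃⟩, ⟨s₁,s₄⟩, ⟨s₂,s₄⟩ is a unit of R. -/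
/-!
Split `Fin 4` as `Fin 2 ⊕ Fin 2`. The Gram matrix becomes `[[0, C], [D, E]]`, and swapping its
two column blocks turns it into the block-triangular `[[C, 0], [E, D]]`, so its determinant is
`± det C * det D`. A unit determinant therefore forces `det C` to be a unit, and the matrix in
the statement is `Cᵀ`.
-/

namespace Matrix

variable {n R : Type*} [Fintype n] [DecidableEq n] [CommRing R]

theorem sign_mul_det_fromBlocks_zero₁₁ (C D E : Matrix n n R) :
    Equiv.Perm.sign (Equiv.sumComm n n) * (fromBlocks 0 C D E).det = C.det * D.det := by
  rw [← det_fromBlocks_zero₁₂ C E D, ← submatrix_id_id (fromBlocks C 0 E D),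
    ← fromBlocks_submatrix_sum_swap_right]
  exact (det_permute' (Equiv.sumComm n n) _).symm

theorem isUnit_det_of_isUnit_det_fromBlocks_zero₁₁ {C D E : Matrix n n R}
    (h : IsUnit (fromBlocks 0 C D E).det) : IsUnit C.det :=
  isUnit_of_mul_isUnit_left <| sign_mul_det_fromBlocks_zero₁₁ C D E ▸
    ((Units.isUnit _).map (Int.castRingHom R)).mul h

end Matrix

/-- Let `s₁, …, s₄` be a basis of a free module of rank 4 over a commutative ring `R`,
equipped with a bilinear form whose Gram matrix has unit determinant and such that
`⟨s_i, s_j⟩ = 0` for `i, j ∈ {1, 2}`.  Then the determinant of the 2×2 matrix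
`!![⟨s₁,s₃⟩, ⟨s₂,s₃⟩; ⟨s₁,s₄⟩, ⟨s₂,s₄⟩]` is a unit of `R`. -/
theorem isUnit_offDiagonal_block_of_gram
    {R V : Type*} [CommRing R] [AddCommGroup V] [Module R V]
    (B : V →ₗ[R] V →ₗ[R] R) (s : Module.Basis (Fin 4) R V)
    (hdet : IsUnit (Matrix.det (Matrix.of fun i j : Fin 4 => B (s i) (s j))))
    (hzero : ∀ i j : Fin 4, (i : ℕ) < 2 → (j : ℕ) < 2 → B (s i) (s j) = 0) :
    IsUnit (Matrix.det !![B (s 0) (s 2), B (s 1) (s 2); B (s 0) (s 3), B (s 1) (s 3)]) := by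
  set e : Fin 2 ⊕ Fin 2 ≃ Fin 4 := finSumFinEquiv
  set G := Matrix.reindex e.symm e.symm (Matrix.of fun i j : Fin 4 => B (s i) (s j))
  have hblock : G.toBlocks₁₁ = 0 := by
    ext i j
    exact hzero _ _ (Fin.castAdd_lt 2 i) (Fin.castAdd_lt 2 j)
  have hG : IsUnit (Matrix.fromBlocks 0 G.toBlocks₁₂ G.toBlocks₂₁ G.toBlocks₂₂).det := by
    rwa [← hblock, Matrix.fromBlocks_toBlocks, Matrix.det_reindex_self]
  rw [← Matrix.det_transpose]
  convert Matrix.isUnit_det_of_isUnit_det_fromBlocks_zero₁₁ hG using 2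
  ext i j
  fin_cases i <;> fin_cases j <;> rfl
end
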